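/- arXiv:2201.11335 — 7 statements merged into one kernel-verified Lean document; each statement's English description precedes it below -/
import Mathlib

section
/- Let Σ be a positive definite symmetric (t+1)×(t+1) real matrix whose entries satisfy Σ_{τ',τ} = Σ_{τ,τ'} = Σ_{τ,τ} for all τ' < τ (i.e., Σ_{i,j} = Σ_{max(i,j), max(i,j)}). Then det Σ = Σ_{t,t} · ∏_{τ=0}^{t-1} (Σ_{τ,τ} − Σ_{τ+1,τ+1}). -/
open Matrix Finset

/-- Determinant factorization for a positive definite symmetric matrix whose
entry `(τ', τ)` equals the diagonal entry of the larger index. -/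
theorem stmt_0 (t : ℕ) (S : Matrix (Fin (t + 1)) (Fin (t + 1)) ℝ)
    (hpd : S.PosDef)
    (hstruct : ∀ i j : Fin (t + 1), S i j = S (max i j) (max i j)) :
    S.det = S (Fin.last t) (Fin.last t) *
      ∏ τ : Fin t, (S τ.castSucc τ.castSucc - S τ.succ τ.succ) := by
  classical
  set E : Matrix (Fin (t + 1)) (Fin (t + 1)) ℝ :=
    fun k j => if k = j then 1 else if (k : ℕ) = (j : ℕ) + 1 then -1 else 0 with hE
  have hEdet : E.det = 1 := by
    rw [Matrix.det_of_lowerTriangular E]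
    · simp [hE]
    · intro i j hij
      simp only [hE]
      have h1 : i ≠ j := by
        intro h; subst h; exact lt_irrefl _ hij
      have h2 : (i : ℕ) ≠ (j : ℕ) + 1 := by
        have : (i : ℕ) < (j : ℕ) := hij
        omega
      simp [h1, h2]
  have hmul : ∀ i j : Fin (t + 1), (S * E) i j =
      if h : (j : ℕ) < t then S i j - S i ⟨(j : ℕ) + 1, by omega⟩ else S i j := by
    intro i j
    rw [Matrix.mul_apply]
    by_cases h : (j : ℕ) < t
    · rw [dif_pos h]
      have hsum : ∀ k : Fin (t + 1), S i k * E k j =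
          (if k = j then S i j else 0) +
          (if k = (⟨(j : ℕ) + 1, by omega⟩ : Fin (t + 1)) then -S i k else 0) := by
        intro k
        simp only [hE]
        by_cases hk1 : k = j
        · subst hk1
          have : ¬ (k = (⟨(k : ℕ) + 1, by omega⟩ : Fin (t + 1))) := by
            intro hc
            have := congrArg Fin.val hc
            simp at this
          simp [this]
        · by_cases hk2 : k = (⟨(j : ℕ) + 1, by omega⟩ : Fin (t + 1))
          · have : (k : ℕ) = (j : ℕ) + 1 := by rw [hk2]
            simp [hk1, hk2, this, hk2 ▸ hk1]
          · have : (k : ℕ) ≠ (j : ℕ) + 1 := by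
              intro hc
              apply hk2
              exact Fin.ext hc
            simp [hk1, hk2, this]
      rw [Finset.sum_congr rfl (fun k _ => hsum k), Finset.sum_add_distrib,
        Finset.sum_ite_eq' , Finset.sum_ite_eq']
      simp [sub_eq_add_neg]
    · rw [dif_neg h]
      have hj : j = Fin.last t := by
        apply Fin.ext
        have := j.isLt
        simp [Fin.last]
        omega
      have hsum : ∀ k : Fin (t + 1), S i k * E k j =
          (if k = j then S i j else 0) := by
        intro k
        simp only [hE]
        by_cases hk1 : k = j
        · subst hk1; simp
        · have : (k : ℕ) ≠ (j : ℕ) + 1 := by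
            have hk := k.isLt
            subst hj
            simp [Fin.last]
            omega
          simp [hk1, this]
      rw [Finset.sum_congr rfl (fun k _ => hsum k), Finset.sum_ite_eq']
      simp
  have htri : ∀ i j : Fin (t + 1), j < i → (S * E) i j = 0 := by
    intro i j hij
    rw [hmul i j]
    have h : (j : ℕ) < t := by
      have h1 : (j : ℕ) < (i : ℕ) := hij
      have h2 := i.isLt
      omega
    rw [dif_pos h]
    have h1 : max i j = i := max_eq_left (le_of_lt hij)
    have h2 : max i (⟨(j : ℕ) + 1, by omega⟩ : Fin (t + 1)) = i := by
      apply max_eq_left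
      have : (j : ℕ) < (i : ℕ) := hij
      exact Fin.le_def.mpr (by simp; omega)
    rw [hstruct i j, hstruct i ⟨(j : ℕ) + 1, by omega⟩, h1, h2, sub_self]
  have hdet : (S * E).det = S (Fin.last t) (Fin.last t) *
      ∏ τ : Fin t, (S τ.castSucc τ.castSucc - S τ.succ τ.succ) := by
    rw [Matrix.det_of_upperTriangular]
    · rw [Fin.prod_univ_castSucc]
      have hlast : (S * E) (Fin.last t) (Fin.last t) = S (Fin.last t) (Fin.last t) := by
        rw [hmul]
        rw [dif_neg (by simp [Fin.last])]
      rw [hlast, mul_comm]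
      congr 1
      apply Finset.prod_congr rfl
      intro τ _
      rw [hmul]
      have hτ : ((τ.castSucc : Fin (t + 1)) : ℕ) < t := by simp
      rw [dif_pos hτ]
      have he : (⟨((τ.castSucc : Fin (t + 1)) : ℕ) + 1, by omega⟩ : Fin (t + 1)) = τ.succ :=
        Fin.ext (by simp)
      rw [he, hstruct τ.castSucc τ.succ,
        max_eq_right (Fin.castSucc_le_succ τ)]
    · intro i j hij
      exact htri i j hij
  have := Matrix.det_mul S E
  rw [hEdet, mul_one] at this
  rw [← this, hdet]
end

section
/- Let Σ be a positive definite symmetric (t+1)×(t+1) real matrix with Σ_{τ',τ} = Σ_{τ,τ} for all τ' ≤ τ. Then the diagonal entries are strictly decreasing: Σ_{τ,τ} > Σ_{τ+1,τ+1} for all τ ∈ {0,…,t−1}. -/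
open Matrix

/-- For a positive definite symmetric matrix whose entry `(τ', τ)` with `τ' ≤ τ`
equals the diagonal entry `(τ, τ)`, the diagonal entries are strictly decreasing. -/
theorem stmt_1 (t : ℕ) (S : Matrix (Fin (t + 1)) (Fin (t + 1)) ℝ)
    (hpd : S.PosDef)
    (hstruct : ∀ i j : Fin (t + 1), i ≤ j → S i j = S j j) :
    ∀ τ : Fin t, S τ.succ τ.succ < S τ.castSucc τ.castSucc := by
  intro τ
  set i := τ.castSucc with hi
  set j := τ.succ with hj
  have hij : i < j := Fin.castSucc_lt_succ
  have hne : i ≠ j := ne_of_lt hij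
  set x : Fin (t + 1) → ℝ := Pi.single i 1 - Pi.single j 1 with hx
  have hx0 : x ≠ 0 := by
    intro h
    have := congrFun h i
    simp [hx, Pi.single_apply, hne] at this
  have hpos := hpd.dotProduct_mulVec_pos hx0
  have hsym : S j i = S i j := by
    have := hpd.isHermitian.apply i j
    simpa using this
  have hcalc : star x ⬝ᵥ (S *ᵥ x) = S i i - S j j := by
    have hji : S j i = S j j := by rw [hsym, hstruct i j (le_of_lt hij)]
    have hij' : S i j = S j j := hstruct i j (le_of_lt hij)
    simp [hx, dotProduct_sub, sub_dotProduct, mulVec_sub, star_sub,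
      mulVec_single, single_dotProduct, dotProduct_single, hji, hij']
  rw [hcalc] at hpos
  simpa using sub_pos.mp (by simpa using hpos)
end

section
/- Let Σ_t be a positive definite symmetric (t+1)×(t+1) matrix and, for t' ≤ t, let Σ_{t'} be its upper-left (t'+1)×(t'+1) submatrix. Define W̃_{t'} as the weighted combination with weights Σ_{t'}^{-1}1/(1ᵀΣ_{t'}^{-1}1) of a zero-mean Gaussian vector with covariance Σ_t restricted to the first t'+1 coordinates. Then E[W̃_{t'} W̃_t] = 1/(1ᵀ Σ_t^{-1} 1) for all t' ≤ t; in particular the cross-covariance is independent of t'. -/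
open Matrix MeasureTheory

/-- The weighted combination of a zero-mean random vector with covariance `S`, using
on the first `t'+1` coordinates the weights `S_{t'}⁻¹1/(1ᵀS_{t'}⁻¹1)` built from the
leading principal submatrix `S_{t'}`. -/
noncomputable def weightedComb {Ω : Type*} (t t' : ℕ) (h : t' ≤ t)
    (S : Matrix (Fin (t + 1)) (Fin (t + 1)) ℝ) (W : Ω → Fin (t + 1) → ℝ) : Ω → ℝ :=
  fun ω =>
    let S' := S.submatrix (Fin.castLE (by omega : t' + 1 ≤ t + 1))
      (Fin.castLE (by omega : t' + 1 ≤ t + 1))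
    let w := ((1 : Fin (t' + 1) → ℝ) ⬝ᵥ (S'⁻¹ *ᵥ (1 : Fin (t' + 1) → ℝ)))⁻¹ •
      (S'⁻¹ *ᵥ (1 : Fin (t' + 1) → ℝ))
    ∑ i : Fin (t' + 1), w i * W ω (Fin.castLE (by omega : t' + 1 ≤ t + 1) i)

lemma sum_ext_eq {n m : ℕ} (h : m ≤ n) (x : Fin m → ℝ) (f : Fin n → ℝ) :
    ∑ j, (fun j : Fin n => if hj : (j:ℕ) < m then x ⟨j, hj⟩ else 0) j * f j
      = ∑ i : Fin m, x i * f (Fin.castLE h i) := by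
  calc ∑ j, (fun j : Fin n => if hj : (j:ℕ) < m then x ⟨j, hj⟩ else 0) j * f j
      = ∑ j ∈ Finset.univ.map (Fin.castLEEmb h),
          (fun j : Fin n => if hj : (j:ℕ) < m then x ⟨j, hj⟩ else 0) j * f j := by
        symm
        apply Finset.sum_subset (Finset.subset_univ _)
        intro j _ hj
        have : ¬ (j:ℕ) < m := fun hlt =>
          hj (Finset.mem_map.mpr ⟨⟨j, hlt⟩, Finset.mem_univ _, rfl⟩)
        simp [this]
    _ = ∑ i : Fin m, x i * f (Fin.castLE h i) := by
        rw [Finset.sum_map]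
        apply Finset.sum_congr rfl
        intro i _
        have hi : ((Fin.castLEEmb h i : Fin n) : ℕ) < m := i.2
        simp [Fin.castLEEmb, Fin.castLE, hi]

lemma posdef_castLE {n m : ℕ} (h : m ≤ n) {S : Matrix (Fin n) (Fin n) ℝ} (hpd : S.PosDef) :
    (S.submatrix (Fin.castLE h) (Fin.castLE h)).PosDef := by
  rw [posDef_iff_dotProduct_mulVec]
  constructor
  · exact (hpd.1.submatrix _)
  · intro x hx
    set y : Fin n → ℝ := fun j => if hj : (j:ℕ) < m then x ⟨j, hj⟩ else 0 with hy
    have hyx : ∀ i : Fin m, y (Fin.castLE h i) = x i := by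
      intro i; simp [hy, Fin.castLE, i.2]
    have hy0 : y ≠ 0 := by
      intro h0
      apply hx
      funext i
      have := congrFun h0 (Fin.castLE h i)
      rwa [hyx] at this
    have key : (star y) ⬝ᵥ (S *ᵥ y)
        = (star x) ⬝ᵥ ((S.submatrix (Fin.castLE h) (Fin.castLE h)) *ᵥ x) := by
      simp only [dotProduct, mulVec, star_trivial]
      rw [sum_ext_eq h x (fun j => ∑ l, S j l * y l)]
      apply Finset.sum_congr rfl
      intro i _
      congr 1
      have : ∀ l, S (Fin.castLE h i) l * y l = y l * S (Fin.castLE h i) l := fun l => mul_comm _ _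
      rw [Finset.sum_congr rfl (fun l _ => this l),
        sum_ext_eq h x (fun l => S (Fin.castLE h i) l)]
      apply Finset.sum_congr rfl
      intro k _
      rw [mul_comm]
      rfl
    rw [← key]
    exact hpd.dotProduct_mulVec_pos hy0

/-- Covariance identity: `E[W̃_{t'} W̃_t] = 1/(1ᵀ S_t⁻¹ 1)` for all `t' ≤ t`; in
particular the cross-covariance is independent of `t'`. -/
theorem stmt_3 {Ω : Type*} {m0 : MeasurableSpace Ω} (μ : Measure Ω)
    [IsProbabilityMeasure μ] (t : ℕ)
    (S : Matrix (Fin (t + 1)) (Fin (t + 1)) ℝ) (hpd : S.PosDef)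
    (W : Ω → Fin (t + 1) → ℝ)
    (hWm : ∀ i, Measurable (fun ω => W ω i))
    (hWmean : ∀ i, ∫ ω, W ω i ∂μ = 0)
    (hWint : ∀ i j, Integrable (fun ω => W ω i * W ω j) μ)
    (hWcov : ∀ i j, ∫ ω, W ω i * W ω j ∂μ = S i j) :
    ∀ t' : ℕ, ∀ h : t' ≤ t,
      ∫ ω, weightedComb t t' h S W ω * weightedComb t t le_rfl S W ω ∂μ =
        ((1 : Fin (t + 1) → ℝ) ⬝ᵥ (S⁻¹ *ᵥ (1 : Fin (t + 1) → ℝ)))⁻¹ := by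
  intro t' h
  have hle : t' + 1 ≤ t + 1 := by omega
  set e : Fin (t' + 1) → Fin (t + 1) := Fin.castLE hle with he
  set S' := S.submatrix e e with hS'
  set c' : ℝ := (1 : Fin (t' + 1) → ℝ) ⬝ᵥ (S'⁻¹ *ᵥ 1) with hc'
  set c : ℝ := (1 : Fin (t + 1) → ℝ) ⬝ᵥ (S⁻¹ *ᵥ 1) with hc
  set a : Fin (t' + 1) → ℝ := c'⁻¹ • (S'⁻¹ *ᵥ 1) with ha
  set b : Fin (t + 1) → ℝ := c⁻¹ • (S⁻¹ *ᵥ 1) with hb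
  have hid : ∀ j : Fin (t + 1), Fin.castLE (by omega : t + 1 ≤ t + 1) j = j :=
    fun j => Fin.ext rfl
  have hsub : S.submatrix (Fin.castLE (by omega : t + 1 ≤ t + 1))
      (Fin.castLE (by omega : t + 1 ≤ t + 1)) = S := by
    ext i j; rw [Matrix.submatrix_apply, hid, hid]
  have hWC1 : ∀ ω, weightedComb t t' h S W ω = ∑ i, a i * W ω (e i) := fun ω => rfl
  have hWC2 : ∀ ω, weightedComb t t le_rfl S W ω = ∑ j, b j * W ω j := by
    intro ω
    unfold weightedComb
    simp only [hsub, hid]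
    rfl
  -- expand the product of sums
  have hprod : ∀ ω, weightedComb t t' h S W ω * weightedComb t t le_rfl S W ω
      = ∑ i : Fin (t' + 1), ∑ j : Fin (t + 1),
          (a i * b j) * (W ω (e i) * W ω j) := by
    intro ω
    rw [hWC1, hWC2, Finset.sum_mul_sum]
    apply Finset.sum_congr rfl; intro i _
    apply Finset.sum_congr rfl; intro j _
    ring
  have hint : ∀ (i : Fin (t' + 1)) (j : Fin (t + 1)),
      Integrable (fun ω => (a i * b j) * (W ω (e i) * W ω j)) μ :=
    fun i j => (hWint (e i) j).const_mul _
  have key : ∫ ω, weightedComb t t' h S W ω * weightedComb t t le_rfl S W ω ∂μ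
      = ∑ i : Fin (t' + 1), ∑ j : Fin (t + 1), (a i * b j) * S (e i) j := by
    simp_rw [hprod]
    rw [integral_finset_sum _ (fun i _ => integrable_finset_sum _ (fun j _ => hint i j))]
    apply Finset.sum_congr rfl; intro i _
    rw [integral_finset_sum _ (fun j _ => hint i j)]
    apply Finset.sum_congr rfl; intro j _
    rw [MeasureTheory.integral_const_mul, hWcov]
  rw [key]
  -- now pure linear algebra
  have hdet : IsUnit S.det := isUnit_iff_ne_zero.mpr hpd.det_pos.ne'
  have hSb : S *ᵥ b = c⁻¹ • (1 : Fin (t + 1) → ℝ) := by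
    rw [hb, Matrix.mulVec_smul, Matrix.mulVec_mulVec, Matrix.mul_nonsing_inv _ hdet,
      Matrix.one_mulVec]
  have hinner : ∀ i : Fin (t' + 1), ∑ j : Fin (t + 1), b j * S (e i) j = c⁻¹ := by
    intro i
    have : ∑ j, S (e i) j * b j = (S *ᵥ b) (e i) := rfl
    calc ∑ j, b j * S (e i) j = ∑ j, S (e i) j * b j := by
          apply Finset.sum_congr rfl; intro j _; ring
      _ = (S *ᵥ b) (e i) := rfl
      _ = c⁻¹ := by rw [hSb]; simp
  have hpd' : S'.PosDef := posdef_castLE hle hpd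
  have hc'pos : 0 < c' := by
    have h1 : (1 : Fin (t' + 1) → ℝ) ≠ 0 := by
      intro h0
      have := congrFun h0 0
      simp at this
    have := hpd'.inv.dotProduct_mulVec_pos h1
    simpa [hc'] using this
  have hsuma : ∑ i, a i = 1 := by
    have : ∑ i, a i = c'⁻¹ * ((1 : Fin (t' + 1) → ℝ) ⬝ᵥ (S'⁻¹ *ᵥ 1)) := by
      simp only [ha, Pi.smul_apply, smul_eq_mul, dotProduct, Pi.one_apply, one_mul,
        Finset.mul_sum]
    rw [this, ← hc', inv_mul_cancel₀ hc'pos.ne']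
  calc ∑ i : Fin (t' + 1), ∑ j : Fin (t + 1), (a i * b j) * S (e i) j
      = ∑ i : Fin (t' + 1), a i * (∑ j, b j * S (e i) j) := by
        apply Finset.sum_congr rfl; intro i _
        rw [Finset.mul_sum]
        apply Finset.sum_congr rfl; intro j _; ring
    _ = ∑ i : Fin (t' + 1), a i * c⁻¹ := by
        apply Finset.sum_congr rfl; intro i _; rw [hinner]
    _ = (∑ i, a i) * c⁻¹ := by rw [Finset.sum_mul]
    _ = c⁻¹ := by rw [hsuma, one_mul]
end

section
/- Let X be a square-integrable real random variable and S_{t'}, S_t real random variables such that S_{t'} = S_t + Z where Z is independent of (X, S_t) with E[Z]=0. If additionally E[X|S_{t'}, S_t] = E[X|S_t], then E[(X − E[X|S_{t'}])(X − E[X|S_t]) | S_{t'}, S_t] = E[(X − E[X|S_t])² | S_{t'}, S_t] almost surely. -/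
/-!
Write `Y = E[X | S_t]` and `E' = E[X | S_{t'}]`, both measurable for `σ(S_{t'}, S_t)`. Then
`(X - E')(X - Y) = (X - Y)² + (Y - E')(X - Y)`, and pulling the measurable factor `Y - E'` out of
the conditional expectation leaves `(Y - E') · E[X - Y | S_{t'}, S_t]`, which vanishes because
sufficiency says `E[X | S_{t'}, S_t] = Y`.
-/

open MeasureTheory ProbabilityTheory

namespace MeasureTheory

variable {Ω : Type*} {m m₁ m₂ m0 : MeasurableSpace Ω} {μ : Measure Ω} [IsFiniteMeasure μ]
  {X : Ω → ℝ}

lemma condExp_sub_condExp_ae_eq_zero_of_ae_eq (hm₁ : m₁ ≤ m) (hX : Integrable X μ)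
    (hsuff : μ[X | m] =ᵐ[μ] μ[X | m₁]) :
    μ[X - μ[X | m₁] | m] =ᵐ[μ] 0 := by
  by_cases hm : m ≤ m0
  · filter_upwards [condExp_sub hX integrable_condExp m, hsuff] with ω hsub hω
    rw [hsub, Pi.sub_apply, hω,
      condExp_of_stronglyMeasurable hm (stronglyMeasurable_condExp.mono hm₁) integrable_condExp]
    exact sub_self _
  · simp [condExp_of_not_le hm]

theorem condExp_mul_sub_condExp_ae_eq_condExp_sq (hm₁ : m₁ ≤ m) (hm₂ : m₂ ≤ m)
    (hX : MemLp X 2 μ) (hsuff : μ[X | m] =ᵐ[μ] μ[X | m₁]) :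
    μ[(X - μ[X | m₂]) * (X - μ[X | m₁]) | m] =ᵐ[μ] μ[(X - μ[X | m₁]) ^ 2 | m] := by
  set Y := μ[X | m₁]
  set E := μ[X | m₂]
  have hXY : MemLp (X - Y) 2 μ := hX.sub (hX.condExp one_le_two)
  have hYE : MemLp (Y - E) 2 μ := (hX.condExp one_le_two).sub (hX.condExp one_le_two)
  have hYE_meas : StronglyMeasurable[m] (Y - E) :=
    (stronglyMeasurable_condExp.mono hm₁).sub (stronglyMeasurable_condExp.mono hm₂)
  have hsplit : (X - E) * (X - Y) = (X - Y) ^ 2 + (Y - E) * (X - Y) := by ring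
  have hzero : μ[X - Y | m] =ᵐ[μ] 0 :=
    condExp_sub_condExp_ae_eq_zero_of_ae_eq hm₁ (hX.integrable one_le_two) hsuff
  have hcross : μ[(Y - E) * (X - Y) | m] =ᵐ[μ] 0 := by
    filter_upwards [condExp_mul_of_stronglyMeasurable_left hYE_meas (hYE.integrable_mul hXY)
      (hXY.integrable one_le_two), hzero] with ω hpull hω
    rw [hpull, Pi.mul_apply, hω, Pi.zero_apply, mul_zero]
  rw [hsplit]
  filter_upwards [condExp_add (pow_two (X - Y) ▸ hXY.integrable_mul hXY)
    (hYE.integrable_mul hXY) m, hcross] with ω hadd hω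
  rw [hadd, Pi.add_apply, hω, Pi.zero_apply, add_zero]

end MeasureTheory

theorem stmt_5_general {Ω : Type*} {m0 : MeasurableSpace Ω} (μ : Measure Ω)
    [IsProbabilityMeasure μ]
    (X St' St : Ω → ℝ)
    (hX : MemLp X 2 μ)
    (hsuff : μ[X | MeasurableSpace.comap (fun ω => (St' ω, St ω)) inferInstance]
      =ᵐ[μ] μ[X | MeasurableSpace.comap St inferInstance]) :
    μ[fun ω => (X ω - (μ[X | MeasurableSpace.comap St' inferInstance]) ω) *
        (X ω - (μ[X | MeasurableSpace.comap St inferInstance]) ω)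
      | MeasurableSpace.comap (fun ω => (St' ω, St ω)) inferInstance]
    =ᵐ[μ]
    μ[fun ω => (X ω - (μ[X | MeasurableSpace.comap St inferInstance]) ω) ^ 2
      | MeasurableSpace.comap (fun ω => (St' ω, St ω)) inferInstance] :=
  condExp_mul_sub_condExp_ae_eq_condExp_sq
    (measurable_snd.comp (comap_measurable fun ω => (St' ω, St ω))).comap_le
    (measurable_fst.comp (comap_measurable fun ω => (St' ω, St ω))).comap_le hX hsuff

/-- If `S_{t'} = S_t + Z` with `Z` independent of `(X, S_t)` and zero mean, and if
`E[X | S_{t'}, S_t] = E[X | S_t]`, then the posterior covariance of the two Bayes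
estimates equals the posterior variance of the finer one. -/
theorem stmt_5 {Ω : Type*} {m0 : MeasurableSpace Ω} (μ : Measure Ω)
    [IsProbabilityMeasure μ]
    (X St' St Z : Ω → ℝ)
    (hXm : Measurable X) (hStm : Measurable St) (hZm : Measurable Z)
    (hX : MemLp X 2 μ)
    (hsum : St' = St + Z)
    (hindep : IndepFun (fun ω => (X ω, St ω)) Z μ)
    (hZmean : ∫ ω, Z ω ∂μ = 0)
    (hsuff : μ[X | MeasurableSpace.comap (fun ω => (St' ω, St ω)) inferInstance]
      =ᵐ[μ] μ[X | MeasurableSpace.comap St inferInstance]) :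
    μ[fun ω => (X ω - (μ[X | MeasurableSpace.comap St' inferInstance]) ω) *
        (X ω - (μ[X | MeasurableSpace.comap St inferInstance]) ω)
      | MeasurableSpace.comap (fun ω => (St' ω, St ω)) inferInstance]
    =ᵐ[μ]
    μ[fun ω => (X ω - (μ[X | MeasurableSpace.comap St inferInstance]) ω) ^ 2
      | MeasurableSpace.comap (fun ω => (St' ω, St ω)) inferInstance] :=
  stmt_5_general (m0 := m0) μ X St' St hX hsuff
end

section
/- Let Σ_t be a positive definite symmetric (t+1)×(t+1) matrix satisfying Σ_{τ',τ} = Σ_{τ,τ} for all τ' ≤ τ. Then the optimal-combination variance equals the last diagonal entry: 1/(1ᵀ Σ_t^{-1} 1) = Σ_{t,t}. -/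
open Matrix

/-- Under the nested covariance structure, the optimal-combination variance equals
the last diagonal entry: `1/(1ᵀ S⁻¹ 1) = S t t`. -/
theorem stmt_8 (t : ℕ) (S : Matrix (Fin (t + 1)) (Fin (t + 1)) ℝ)
    (hpd : S.PosDef)
    (hstruct : ∀ i j : Fin (t + 1), i ≤ j → S i j = S j j) :
    ((1 : Fin (t + 1) → ℝ) ⬝ᵥ (S⁻¹ *ᵥ (1 : Fin (t + 1) → ℝ)))⁻¹ =
      S (Fin.last t) (Fin.last t) := by
  set d := S (Fin.last t) (Fin.last t) with hd
  have hx : (Pi.single (Fin.last t) 1 : Fin (t + 1) → ℝ) ≠ 0 := by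
    intro h
    have := congrFun h (Fin.last t)
    simp at this
  have hdpos : 0 < d := by
    have := hpd.dotProduct_mulVec_pos hx
    simpa [dotProduct, mulVec, Pi.single_apply] using this
  have hdet : IsUnit S.det := isUnit_iff_ne_zero.mpr hpd.det_pos.ne'
  -- S *ᵥ (single last d⁻¹) = 1
  have hSv : S *ᵥ (Pi.single (Fin.last t) d⁻¹ : Fin (t + 1) → ℝ) = 1 := by
    funext i
    have h1 : S i (Fin.last t) = d := hstruct i (Fin.last t) (Fin.le_last i)
    simp [mulVec, dotProduct, Pi.single_apply, h1, mul_inv_cancel₀ hdpos.ne']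
  have hinv : S⁻¹ *ᵥ (1 : Fin (t + 1) → ℝ) = Pi.single (Fin.last t) d⁻¹ := by
    rw [← hSv, mulVec_mulVec, nonsing_inv_mul S hdet, one_mulVec]
  rw [hinv]
  have : (1 : Fin (t + 1) → ℝ) ⬝ᵥ Pi.single (Fin.last t) d⁻¹ = d⁻¹ := by
    simp [dotProduct, Pi.single_apply]
  rw [this, inv_inv]
end

section
/- Let A ∈ ℝ^{M×N}, σ² > 0, v > 0, W_t = v(σ²I + vAAᵀ)^{-1}A, and for any matrix W_{t'} ∈ ℝ^{M×N} define γ_{t',t} = (1/N)Tr[(I − W_{t'}ᵀA)ᵀ(I − W_tᵀA)]. If W_{t'} is also the LMMSE filter built with the same v, then γ_{t',t}·v + (σ²/N)Tr(W_{t'}W_tᵀ) = v − (v/N)Tr(Ξ AAᵀ) where Ξ = v(σ²I + vAAᵀ)^{-1}; in particular the posterior covariance between iterations t' and t equals the posterior variance at iteration t. -/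
open Matrix

/-- Matrix-algebra core of the reduction: when both filters are the LMMSE filter
built with the same `v`, `γ·v + (σ²/N)Tr(WWᵀ) = v − (v/N)Tr(Ξ AAᵀ)` with
`Ξ = v(σ²I + vAAᵀ)⁻¹`. -/
theorem stmt_12 (M N : ℕ) (hN : 0 < N)
    (A : Matrix (Fin M) (Fin N) ℝ) (σ2 : ℝ) (hσ : 0 < σ2) (v : ℝ) (hv : 0 < v)
    (W W' : Matrix (Fin M) (Fin N) ℝ) (Ξ : Matrix (Fin M) (Fin M) ℝ)
    (hW : W = v • ((σ2 • (1 : Matrix (Fin M) (Fin M) ℝ) + v • (A * Aᵀ))⁻¹ * A))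
    (hW' : W' = v • ((σ2 • (1 : Matrix (Fin M) (Fin M) ℝ) + v • (A * Aᵀ))⁻¹ * A))
    (hΞ : Ξ = v • (σ2 • (1 : Matrix (Fin M) (Fin M) ℝ) + v • (A * Aᵀ))⁻¹)
    (γ : ℝ)
    (hγ : γ = (1 / (N : ℝ)) *
      Matrix.trace (((1 : Matrix (Fin N) (Fin N) ℝ) - W'ᵀ * A)ᵀ *
        ((1 : Matrix (Fin N) (Fin N) ℝ) - Wᵀ * A))) :
    γ * v + (σ2 / (N : ℝ)) * Matrix.trace (W' * Wᵀ) =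
      v - (v / (N : ℝ)) * Matrix.trace (Ξ * (A * Aᵀ)) := by
  have hNne : (N : ℝ) ≠ 0 := Nat.cast_ne_zero.mpr hN.ne'
  set C : Matrix (Fin M) (Fin M) ℝ := A * Aᵀ with hC
  set B : Matrix (Fin M) (Fin M) ℝ := σ2 • (1 : Matrix (Fin M) (Fin M) ℝ) + v • C with hB
  -- positive definiteness of B
  have hCsd : C.PosSemidef := by
    have h := Matrix.posSemidef_self_mul_conjTranspose A
    rwa [Matrix.conjTranspose_eq_transpose_of_trivial] at h
  have hCt : Cᵀ = C := by simp [hC, Matrix.transpose_mul]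
  have hvC : (v • C).PosSemidef :=
    ⟨by simp [Matrix.IsHermitian, Matrix.conjTranspose_smul, hCsd.1.eq, hCt], fun x => by
      have h := mul_nonneg hv.le (hCsd.2 x)
      simp only [Finsupp.mul_sum] at h
      refine le_of_le_of_eq h (Finsupp.sum_congr fun i _ => Finsupp.sum_congr fun j _ => ?_)
      simp only [Matrix.smul_apply, smul_eq_mul]
      ring⟩
  have hσ1 : (σ2 • (1 : Matrix (Fin M) (Fin M) ℝ)).PosDef := by
    have : σ2 • (1 : Matrix (Fin M) (Fin M) ℝ) = Matrix.diagonal (fun _ => σ2) := by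
      ext i j
      by_cases h : i = j <;> simp [Matrix.one_apply, Matrix.diagonal, h]
    rw [this]
    exact Matrix.posDef_diagonal_iff.mpr (fun _ => hσ)
  have hBpd : B.PosDef := hσ1.add_posSemidef hvC
  have hdet : IsUnit B.det := (Matrix.isUnit_iff_isUnit_det B).mp hBpd.isUnit
  have hinv1 : B⁻¹ * B = 1 := Matrix.nonsing_inv_mul B hdet
  have hBt : Bᵀ = B := by rw [hB]; simp [Matrix.transpose_add, Matrix.transpose_smul, hCt]
  have hiBt : (B⁻¹)ᵀ = B⁻¹ := by rw [Matrix.transpose_nonsing_inv, hBt]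
  -- key matrix identity
  have key : v • (B⁻¹ * C * (B⁻¹ * C)) + σ2 • (B⁻¹ * (B⁻¹ * C)) = B⁻¹ * C := by
    have h1 : B⁻¹ * B * (B⁻¹ * C) = B⁻¹ * C := by rw [hinv1, one_mul]
    calc v • (B⁻¹ * C * (B⁻¹ * C)) + σ2 • (B⁻¹ * (B⁻¹ * C))
        = B⁻¹ * (σ2 • (1 : Matrix (Fin M) (Fin M) ℝ) + v • C) * (B⁻¹ * C) := by
          rw [Matrix.mul_add, Matrix.add_mul]
          simp [Matrix.mul_smul, Matrix.smul_mul, Matrix.mul_assoc]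
          abel
      _ = B⁻¹ * C := by rw [← hB, h1]
  have keytr : v * Matrix.trace (B⁻¹ * C * (B⁻¹ * C))
      + σ2 * Matrix.trace (B⁻¹ * (B⁻¹ * C)) = Matrix.trace (B⁻¹ * C) := by
    have := congrArg Matrix.trace key
    simpa [Matrix.trace_add, Matrix.trace_smul, smul_eq_mul] using this
  -- abbreviations
  set t1 : ℝ := Matrix.trace (B⁻¹ * C) with ht1
  set t2 : ℝ := Matrix.trace (B⁻¹ * C * (B⁻¹ * C)) with ht2
  set t3 : ℝ := Matrix.trace (B⁻¹ * (B⁻¹ * C)) with ht3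
  -- express the three traces in the goal
  have hWt : Wᵀ = v • (Aᵀ * B⁻¹) := by
    rw [hW, Matrix.transpose_smul, Matrix.transpose_mul, hiBt]
  have hS : Wᵀ * A = v • (Aᵀ * B⁻¹ * A) := by
    rw [hWt, Matrix.smul_mul]
  have hS' : W'ᵀ * A = v • (Aᵀ * B⁻¹ * A) := by
    rw [hW', Matrix.transpose_smul, Matrix.transpose_mul, hiBt, Matrix.smul_mul]
  have htrS : Matrix.trace (Aᵀ * B⁻¹ * A) = t1 := by
    rw [Matrix.mul_assoc, Matrix.trace_mul_comm, Matrix.mul_assoc, ht1, hC]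
  have htrS2 : Matrix.trace (Aᵀ * B⁻¹ * A * (Aᵀ * B⁻¹ * A)) = t2 := by
    rw [show Aᵀ * B⁻¹ * A * (Aᵀ * B⁻¹ * A)
        = Aᵀ * (B⁻¹ * (A * Aᵀ) * (B⁻¹ * A)) from by simp [Matrix.mul_assoc],
      Matrix.trace_mul_comm, ht2, hC]
    congr 1
    simp [Matrix.mul_assoc]
  have htrWW : Matrix.trace (W' * Wᵀ) = v ^ 2 * t3 := by
    rw [hW', hWt, Matrix.smul_mul, Matrix.mul_smul, smul_smul, Matrix.trace_smul, smul_eq_mul]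
    have hre : B⁻¹ * A * (Aᵀ * B⁻¹) = B⁻¹ * (A * Aᵀ) * B⁻¹ := by
      simp [Matrix.mul_assoc]
    rw [hre, Matrix.trace_mul_comm, ht3, hC]
    ring
  have htrΞ : Matrix.trace (Ξ * (A * Aᵀ)) = v * t1 := by
    rw [hΞ, Matrix.smul_mul, Matrix.trace_smul, smul_eq_mul, ht1, hC]
  -- γ computation
  have hSsymm : (Aᵀ * B⁻¹ * A)ᵀ = Aᵀ * B⁻¹ * A := by
    simp [Matrix.transpose_mul, hiBt, Matrix.mul_assoc]
  have hγval : γ = (1 / (N : ℝ)) * ((N : ℝ) - 2 * v * t1 + v ^ 2 * t2) := by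
    rw [hγ, hS, hS']
    simp only [Matrix.transpose_sub, Matrix.transpose_one, Matrix.transpose_smul, hSsymm,
      Matrix.sub_mul, Matrix.mul_sub, Matrix.mul_one, Matrix.one_mul, Matrix.smul_mul,
      Matrix.mul_smul, smul_smul, Matrix.trace_sub, Matrix.trace_smul, Matrix.trace_one,
      smul_eq_mul, htrS, htrS2]
    simp only [Fintype.card_fin]
    ring
  rw [hγval, htrWW, htrΞ]
  field_simp
  nlinarith [keytr, sq_nonneg v]
end

section
/- Under the structured covariance assumption (all off-diagonal entries of Σ_t equal the corresponding larger-index diagonal entry) and positive definiteness, the weight vector w = Σ_t^{-1}1/(1ᵀΣ_t^{-1}1) equals the last standard basis vector e_t; i.e., the optimal linear combination puts all weight on the last measurement. -/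
open Matrix

/-- Under the nested covariance structure, the optimal weight vector
`Σ⁻¹1/(1ᵀΣ⁻¹1)` is the last standard basis vector. -/
theorem stmt_16 (t : ℕ) (S : Matrix (Fin (t + 1)) (Fin (t + 1)) ℝ)
    (hpd : S.PosDef)
    (hstruct : ∀ i j : Fin (t + 1), i ≤ j → S i j = S j j) :
    ((1 : Fin (t + 1) → ℝ) ⬝ᵥ (S⁻¹ *ᵥ (1 : Fin (t + 1) → ℝ)))⁻¹ •
      (S⁻¹ *ᵥ (1 : Fin (t + 1) → ℝ)) =
      Pi.single (Fin.last t) (1 : ℝ) := by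
  set c := S (Fin.last t) (Fin.last t) with hc
  have hsingle : (Pi.single (Fin.last t) (1 : ℝ) : Fin (t+1) → ℝ) ≠ 0 := by
    intro h
    have := congrFun h (Fin.last t)
    simp at this
  have hcpos : 0 < c := by
    have := hpd.dotProduct_mulVec_pos (x := Pi.single (Fin.last t) 1) hsingle
    simpa [dotProduct, mulVec, Pi.single_apply, Finset.sum_ite_eq,
      Finset.sum_ite_eq'] using this
  -- S applied to e_last is c • 1
  have hSe : S *ᵥ Pi.single (Fin.last t) 1 = c • (1 : Fin (t + 1) → ℝ) := by
    funext i
    have : (S *ᵥ Pi.single (Fin.last t) 1) i = S i (Fin.last t) := by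
      simp [mulVec, dotProduct, Pi.single_apply, Finset.sum_ite_eq]
    rw [this, hstruct i (Fin.last t) (Fin.le_last i)]
    simp [mul_comm, hc]
  have hinv : S⁻¹ * S = 1 := Matrix.nonsing_inv_mul S (S.isUnit_iff_isUnit_det.mp hpd.isUnit)
  have h1 : S⁻¹ *ᵥ (1 : Fin (t + 1) → ℝ) = c⁻¹ • (Pi.single (Fin.last t) 1 : Fin (t + 1) → ℝ) := by
    have h2 := congrArg (fun v => S⁻¹ *ᵥ v) hSe
    simp only [mulVec_mulVec, hinv, one_mulVec, mulVec_smul] at h2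
    rw [h2, smul_smul, inv_mul_cancel₀ hcpos.ne', one_smul]
  rw [h1]
  have hdot : (1 : Fin (t + 1) → ℝ) ⬝ᵥ (c⁻¹ • (Pi.single (Fin.last t) 1 : Fin (t + 1) → ℝ)) = c⁻¹ := by
    simp [dotProduct, Pi.single_apply, Finset.sum_ite_eq]
  rw [hdot, inv_inv, smul_smul, mul_inv_cancel₀ hcpos.ne', one_smul]
end
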